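/- arXiv:1307.6838 — 11 statements merged into one kernel-verified Lean document; each statement's English description precedes it below -/
import Mathlib

section
/- Let H be a complex Hilbert space, let A and L be bounded linear operators on H, and let θ, φ be real numbers. Define the operator 𝒜 on H × H by 𝒜(u,v) = (A u + (cos θ)·L u + e^{iφ}(sin θ)·L v , e^{-iφ}(sin θ)·L u + A v − (cos θ)·L v), and define 𝒰 on H × H by 𝒰(u,v) = (cos(θ/2)·u − e^{iφ} sin(θ/2)·v , e^{-iφ} sin(θ/2)·u + cos(θ/2)·v). Then 𝒰 is a unitary operator on H × H (i.e. a surjective linear isometry for the Hilbert-space norm ‖(u,v)‖² = ‖u‖² + ‖v‖²), and 𝒜 ∘ 𝒰 = 𝒰 ∘ 𝒜̃, where 𝒜̃(u,v) = ((A+L)u , (A−L)v). -/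
/-!
Write `a = cos (θ/2)` and `b = e^{-iφ} sin (θ/2)`. Then `𝒰` is the matrix `U = [[a, -b̄], [b, ā]]`
acting blockwise on `H × H`, and by the half-angle formulas `𝒜 = A ⊗ 1 + L ⊗ M` with
`M = [[|a|² - |b|², 2ab̄], [2bā, |b|² - |a|²]] = U diag(1, -1) U*`. Since `|a|² + |b|² = 1`, `U` is
unitary with inverse `[[ā, b̄], [-b, a]]`, and `M U = U diag(1, -1)` gives `𝒜 𝒰 = 𝒰 𝒜̃`.
-/

open ComplexConjugate

section SU2

variable {𝕜 E : Type*} [RCLike 𝕜]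

def su2Map [AddCommGroup E] [Module 𝕜 E] (a b : 𝕜) (p : E × E) : E × E :=
  (a • p.1 - conj b • p.2, b • p.1 + conj a • p.2)

/-- `A ⊗ 1 + L ⊗ U diag(1, -1) U*` for `U` the matrix of `su2Map a b`, when `|a|² + |b|² = 1`. -/
def coupledMap [AddCommGroup E] [Module 𝕜 E] (a b : 𝕜) (A L : E →ₗ[𝕜] E) (p : E × E) :
    E × E :=
  (A p.1 + (a * conj a - b * conj b) • L p.1 + (2 * a * conj b) • L p.2,
   (2 * b * conj a) • L p.1 + A p.2 - (a * conj a - b * conj b) • L p.2)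

theorem norm_sq_su2Map [NormedAddCommGroup E] [InnerProductSpace 𝕜 E] (a b : 𝕜) (p : E × E) :
    ‖(su2Map a b p).1‖ ^ 2 + ‖(su2Map a b p).2‖ ^ 2
      = (‖a‖ ^ 2 + ‖b‖ ^ 2) * (‖p.1‖ ^ 2 + ‖p.2‖ ^ 2) := by
  simp only [su2Map]
  rw [norm_sub_sq (𝕜 := 𝕜), norm_add_sq (𝕜 := 𝕜)]
  simp only [inner_smul_left, inner_smul_right, norm_smul, RCLike.norm_conj]
  ring_nf

variable [AddCommGroup E] [Module 𝕜 E]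

theorem su2Map_su2Map_conj_neg (a b : 𝕜) (p : E × E) :
    su2Map a b (su2Map (conj a) (-b) p) = (a * conj a + b * conj b) • p := by
  ext <;> simp only [su2Map, RCLike.conj_conj, map_neg, Prod.smul_fst, Prod.smul_snd] <;>
    module

theorem coupledMap_su2Map (a b : 𝕜) (A L : E →ₗ[𝕜] E) (p : E × E) :
    coupledMap a b A L (su2Map a b p) =
      su2Map a b ((A + (a * conj a + b * conj b) • L) p.1,
        (A - (a * conj a + b * conj b) • L) p.2) := by
  ext <;> simp only [coupledMap, su2Map, map_add, map_sub, map_smul, LinearMap.add_apply,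
      LinearMap.sub_apply, LinearMap.smul_apply] <;>
    module

end SU2

section HalfAngle

open Complex

variable (θ φ : ℝ)

theorem conj_exp_neg_mul_I_mul_ofReal (x : ℝ) :
    conj (exp (-(φ : ℂ) * I) * x) = exp ((φ : ℂ) * I) * x := by
  rw [map_mul, ← exp_conj, conj_ofReal, map_mul, map_neg, conj_ofReal, conj_I, neg_mul_neg]

theorem exp_mul_I_mul_exp_neg_mul_I : exp ((φ : ℂ) * I) * exp (-(φ : ℂ) * I) = 1 := by
  rw [← exp_add, ← add_mul, add_neg_cancel, zero_mul, exp_zero]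

theorem exp_neg_mul_I_mul_ofReal_mul_conj (x : ℝ) :
    exp (-(φ : ℂ) * I) * x * conj (exp (-(φ : ℂ) * I) * x) = (x : ℂ) ^ 2 := by
  rw [conj_exp_neg_mul_I_mul_ofReal]
  linear_combination (x : ℂ) ^ 2 * exp_mul_I_mul_exp_neg_mul_I φ

theorem su2Map_cos_half_exp_sin_half {E : Type*} [AddCommGroup E] [Module ℂ E] (u v : E) :
    su2Map (Real.cos (θ / 2) : ℂ) (exp (-(φ : ℂ) * I) * Real.sin (θ / 2)) (u, v) =
      ((Real.cos (θ / 2) : ℂ) • u - (exp ((φ : ℂ) * I) * (Real.sin (θ / 2) : ℂ)) • v,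
       (exp (-(φ : ℂ) * I) * (Real.sin (θ / 2) : ℂ)) • u + (Real.cos (θ / 2) : ℂ) • v) := by
  rw [su2Map, conj_exp_neg_mul_I_mul_ofReal, conj_ofReal]

theorem cos_half_exp_sin_half_normalized :
    (Real.cos (θ / 2) : ℂ) * conj (Real.cos (θ / 2) : ℂ)
      + exp (-(φ : ℂ) * I) * Real.sin (θ / 2) * conj (exp (-(φ : ℂ) * I) * Real.sin (θ / 2))
      = 1 := by
  rw [conj_ofReal, exp_neg_mul_I_mul_ofReal_mul_conj, ← sq]
  exact_mod_cast Real.cos_sq_add_sin_sq (θ / 2)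

theorem coupledMap_cos_half_exp_sin_half {E : Type*} [AddCommGroup E] [Module ℂ E]
    (A L : E →ₗ[ℂ] E) (u v : E) :
    coupledMap (Real.cos (θ / 2) : ℂ) (exp (-(φ : ℂ) * I) * Real.sin (θ / 2)) A L (u, v) =
      (A u + (Real.cos θ : ℂ) • L u + (exp ((φ : ℂ) * I) * (Real.sin θ : ℂ)) • L v,
       (exp (-(φ : ℂ) * I) * (Real.sin θ : ℂ)) • L u + A v - (Real.cos θ : ℂ) • L v) := by
  have hcos : (Real.cos (θ / 2) : ℂ) * Real.cos (θ / 2) - (Real.sin (θ / 2) : ℂ) ^ 2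
      = Real.cos θ := by
    rw [← sq]
    norm_cast
    rw [← Real.cos_two_mul', mul_div_cancel₀ θ two_ne_zero]
  have hsin : (2 : ℂ) * Real.sin (θ / 2) * Real.cos (θ / 2) = Real.sin θ := by
    norm_cast
    rw [← Real.sin_two_mul, mul_div_cancel₀ θ two_ne_zero]
  rw [coupledMap, exp_neg_mul_I_mul_ofReal_mul_conj, conj_exp_neg_mul_I_mul_ofReal,
    conj_ofReal, hcos, ← hsin]
  ext <;> simp only <;> module

end HalfAngle

theorem coupled_operator_decoupling_general
    {H : Type*} [NormedAddCommGroup H] [InnerProductSpace ℂ H]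
    (A L : H →L[ℂ] H) (θ φ : ℝ)
    (𝒜 𝒰 𝒜' : (H × H) →L[ℂ] (H × H))
    (h𝒜 : ∀ u v : H, 𝒜 (u, v) =
      (A u + (Real.cos θ : ℂ) • L u
          + (Complex.exp ((φ : ℂ) * Complex.I) * (Real.sin θ : ℂ)) • L v,
       (Complex.exp (-(φ : ℂ) * Complex.I) * (Real.sin θ : ℂ)) • L u
          + A v - (Real.cos θ : ℂ) • L v))
    (h𝒰 : ∀ u v : H, 𝒰 (u, v) =
      ((Real.cos (θ / 2) : ℂ) • u
          - (Complex.exp ((φ : ℂ) * Complex.I) * (Real.sin (θ / 2) : ℂ)) • v,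
       (Complex.exp (-(φ : ℂ) * Complex.I) * (Real.sin (θ / 2) : ℂ)) • u
          + (Real.cos (θ / 2) : ℂ) • v))
    (h𝒜' : ∀ u v : H, 𝒜' (u, v) = ((A + L) u, (A - L) v)) :
    (∀ u v : H, ‖(𝒰 (u, v)).1‖ ^ 2 + ‖(𝒰 (u, v)).2‖ ^ 2 = ‖u‖ ^ 2 + ‖v‖ ^ 2)
    ∧ Function.Surjective 𝒰
    ∧ ∀ p : H × H, 𝒜 (𝒰 p) = 𝒰 (𝒜' p) := by
  set a : ℂ := ↑(Real.cos (θ / 2))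
  set b : ℂ := Complex.exp (-(φ : ℂ) * Complex.I) * ↑(Real.sin (θ / 2))
  have hab : a * conj a + b * conj b = 1 := cos_half_exp_sin_half_normalized θ φ
  have hab_norm : ‖a‖ ^ 2 + ‖b‖ ^ 2 = 1 := by
    rw [Complex.mul_conj, Complex.mul_conj] at hab
    rw [Complex.sq_norm, Complex.sq_norm]
    exact_mod_cast hab
  have h𝒰_eq : ∀ p, 𝒰 p = su2Map a b p := fun ⟨u, v⟩ ↦
    (h𝒰 u v).trans (su2Map_cos_half_exp_sin_half θ φ u v).symm
  have h𝒜_eq : ∀ p, 𝒜 p = coupledMap a b A L p := fun ⟨u, v⟩ ↦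
    (h𝒜 u v).trans (coupledMap_cos_half_exp_sin_half θ φ A L u v).symm
  refine ⟨fun u v ↦ ?_, fun p ↦ ⟨su2Map (conj a) (-b) p, ?_⟩, fun ⟨u, v⟩ ↦ ?_⟩
  · rw [h𝒰_eq, norm_sq_su2Map, hab_norm, one_mul]
  · rw [h𝒰_eq, su2Map_su2Map_conj_neg, hab, one_smul]
  · rw [h𝒰_eq, h𝒜_eq, coupledMap_su2Map, hab, one_smul, ← h𝒰_eq, h𝒜' u v]
    rfl

/-- Decoupling identity 𝒜𝒰 = 𝒰𝒜̃ for the coupled two-graph operator, and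
unitarity of 𝒰 (surjective linear isometry for the Hilbert norm
‖(u,v)‖² = ‖u‖² + ‖v‖² on H × H). -/
theorem coupled_operator_decoupling
    {H : Type*} [NormedAddCommGroup H] [InnerProductSpace ℂ H] [CompleteSpace H]
    (A L : H →L[ℂ] H) (θ φ : ℝ)
    (𝒜 𝒰 𝒜' : (H × H) →L[ℂ] (H × H))
    (h𝒜 : ∀ u v : H, 𝒜 (u, v) =
      (A u + (Real.cos θ : ℂ) • L u
          + (Complex.exp ((φ : ℂ) * Complex.I) * (Real.sin θ : ℂ)) • L v,
       (Complex.exp (-(φ : ℂ) * Complex.I) * (Real.sin θ : ℂ)) • L u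
          + A v - (Real.cos θ : ℂ) • L v))
    (h𝒰 : ∀ u v : H, 𝒰 (u, v) =
      ((Real.cos (θ / 2) : ℂ) • u
          - (Complex.exp ((φ : ℂ) * Complex.I) * (Real.sin (θ / 2) : ℂ)) • v,
       (Complex.exp (-(φ : ℂ) * Complex.I) * (Real.sin (θ / 2) : ℂ)) • u
          + (Real.cos (θ / 2) : ℂ) • v))
    (h𝒜' : ∀ u v : H, 𝒜' (u, v) = ((A + L) u, (A - L) v)) :
    (∀ u v : H, ‖(𝒰 (u, v)).1‖ ^ 2 + ‖(𝒰 (u, v)).2‖ ^ 2 = ‖u‖ ^ 2 + ‖v‖ ^ 2)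
    ∧ Function.Surjective 𝒰
    ∧ ∀ p : H × H, 𝒜 (𝒰 p) = 𝒰 (𝒜' p) :=
  coupled_operator_decoupling_general A L θ φ 𝒜 𝒰 𝒜' h𝒜 h𝒰 h𝒜'
end

section
/- Let H be a complex Hilbert space, A and V bounded self-adjoint operators on H, λ, λ₀, θ, φ real numbers, and u ∈ H a vector with (A + V)u = λu. Define the operator 𝒜 + 𝒱₁ on H × H by (𝒜+𝒱₁)(w₁,w₂) = (A w₁ + λ₀(cos θ)·w₁ + e^{iφ} λ₀ (sin θ)·w₂ + V w₁ , e^{-iφ} λ₀ (sin θ)·w₁ + A w₂ − λ₀(cos θ)·w₂ + V w₂). Then the vector ũ = (cos(θ/2)·u , e^{-iφ} sin(θ/2)·u) satisfies (𝒜 + 𝒱₁)ũ = (λ + λ₀)·ũ; moreover ũ = 0 if and only if u = 0, so if u ≠ 0 then λ + λ₀ is an eigenvalue of 𝒜 + 𝒱₁ with eigenvector ũ. -/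
/-- Theorem 1 of the paper, perturbation 𝒱₁: if (A+V)u = λu then
ut = (cos(θ/2)·u, e^{-iφ}sin(θ/2)·u) satisfies (𝒜+𝒱₁)ut = (λ+λ₀)ut, with ut = 0 iff u = 0;
hence if u ≠ 0 then λ+λ₀ is an eigenvalue of 𝒜+𝒱₁ with eigenvector ut. -/
theorem embedded_eigenvalue_V1
    {H : Type*} [NormedAddCommGroup H] [InnerProductSpace ℂ H] [CompleteSpace H]
    (A V : H →L[ℂ] H) (hA : IsSelfAdjoint A) (hV : IsSelfAdjoint V)
    (lam lam0 θ φ : ℝ) (u : H)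
    (hu : A u + V u = (lam : ℂ) • u)
    (T : (H × H) →L[ℂ] (H × H))
    (hT : ∀ w₁ w₂ : H, T (w₁, w₂) =
      (A w₁ + ((lam0 * Real.cos θ : ℝ) : ℂ) • w₁
          + (Complex.exp ((φ : ℂ) * Complex.I) * (lam0 : ℂ) * (Real.sin θ : ℂ)) • w₂
          + V w₁,
       (Complex.exp (-(φ : ℂ) * Complex.I) * (lam0 : ℂ) * (Real.sin θ : ℂ)) • w₁
          + A w₂ - ((lam0 * Real.cos θ : ℝ) : ℂ) • w₂
          + V w₂))
    (ut : H × H)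
    (hut : ut = ((Real.cos (θ / 2) : ℂ) • u,
               (Complex.exp (-(φ : ℂ) * Complex.I) * (Real.sin (θ / 2) : ℂ)) • u)) :
    T ut = (((lam + lam0 : ℝ)) : ℂ) • ut
    ∧ (ut = 0 ↔ u = 0)
    ∧ (u ≠ 0 →
        Module.End.HasEigenvalue (T : (H × H) →ₗ[ℂ] (H × H)) (((lam + lam0 : ℝ)) : ℂ)) := by
  have hEe : Complex.exp ((φ : ℂ) * Complex.I) * Complex.exp (-(φ : ℂ) * Complex.I) = 1 := by
    rw [← Complex.exp_add]; ring_nf; exact Complex.exp_zero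
  have hAu : A u = (lam : ℂ) • u - V u := by rw [← hu]; abel
  have htrig1 : Complex.cos θ * Complex.cos ((θ : ℂ) / 2)
      + Complex.sin θ * Complex.sin ((θ : ℂ) / 2) = Complex.cos ((θ : ℂ) / 2) := by
    rw [← Complex.cos_sub]; ring_nf
  have htrig2 : Complex.sin θ * Complex.cos ((θ : ℂ) / 2)
      - Complex.cos θ * Complex.sin ((θ : ℂ) / 2) = Complex.sin ((θ : ℂ) / 2) := by
    rw [← Complex.sin_sub]; ring_nf
  have hmain : T ut = (((lam + lam0 : ℝ)) : ℂ) • ut := by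
    rw [hut, hT]
    refine Prod.ext ?_ ?_
    · simp only [map_smul, hAu, Prod.smul_mk]
      match_scalars <;> push_cast
      · linear_combination ((lam0 : ℂ) * Complex.sin θ * Complex.sin ((θ : ℂ) / 2)) * hEe
          + (lam0 : ℂ) * htrig1
      all_goals ring
    · simp only [map_smul, hAu, Prod.smul_mk]
      match_scalars <;> push_cast
      · linear_combination (Complex.exp (-(φ : ℂ) * Complex.I) * (lam0 : ℂ)) * htrig2
      all_goals ring
  have hexp_ne : Complex.exp (-(φ : ℂ) * Complex.I) ≠ 0 := Complex.exp_ne_zero _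
  have hzero : ut = 0 ↔ u = 0 := by
    constructor
    · intro h
      rw [hut, Prod.ext_iff] at h
      simp only [Prod.fst_zero, Prod.snd_zero, smul_eq_zero] at h
      rcases h.1 with h1 | h1
      · rcases h.2 with h2 | h2
        · exfalso
          rcases mul_eq_zero.mp h2 with h3 | h3
          · exact hexp_ne h3
          · have hc : Real.cos (θ / 2) = 0 := by exact_mod_cast h1
            have hs : Real.sin (θ / 2) = 0 := by exact_mod_cast h3
            have := Real.sin_sq_add_cos_sq (θ / 2)
            rw [hs, hc] at this; norm_num at this
        · exact h2
      · exact h1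
    · intro h; rw [hut, h]; simp
  refine ⟨hmain, hzero, fun hu0 => ?_⟩
  have hut0 : ut ≠ 0 := fun h => hu0 (hzero.mp h)
  exact Module.End.hasEigenvalue_of_hasEigenvector
    ⟨Module.End.mem_eigenspace_iff.mpr hmain, hut0⟩
end

section
/- Let H be a complex Hilbert space, A and V bounded self-adjoint operators on H, λ, λ₀, θ, φ real numbers, and u ∈ H a vector with (A + V)u = λu. Define the operator 𝒜 + 𝒱₂ on H × H by (𝒜+𝒱₂)(w₁,w₂) = (A w₁ + λ₀(cos θ)·w₁ + e^{iφ} λ₀ (sin θ)·w₂ + cos²(θ/2)·V w₁ + (1/2)e^{iφ}(sin θ)·V w₂ , e^{-iφ} λ₀ (sin θ)·w₁ + A w₂ − λ₀(cos θ)·w₂ + (1/2)e^{-iφ}(sin θ)·V w₁ + sin²(θ/2)·V w₂). Then the vector ũ = (cos(θ/2)·u , e^{-iφ} sin(θ/2)·u) satisfies (𝒜 + 𝒱₂)ũ = (λ + λ₀)·ũ; moreover ũ = 0 if and only if u = 0, so if u ≠ 0 then λ + λ₀ is an eigenvalue of 𝒜 + 𝒱₂ with eigenvector ũ. -/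
/-- Theorem 1 of the paper, perturbation 𝒱₂: if (A+V)u = λu then
ut = (cos(θ/2)·u, e^{-iφ}sin(θ/2)·u) satisfies (𝒜+𝒱₂)ut = (λ+λ₀)ut, with ut = 0 iff u = 0;
hence if u ≠ 0 then λ+λ₀ is an eigenvalue of 𝒜+𝒱₂ with eigenvector ut. -/
theorem embedded_eigenvalue_V2
    {H : Type*} [NormedAddCommGroup H] [InnerProductSpace ℂ H] [CompleteSpace H]
    (A V : H →L[ℂ] H) (hA : IsSelfAdjoint A) (hV : IsSelfAdjoint V)
    (lam lam0 θ φ : ℝ) (u : H)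
    (hu : A u + V u = (lam : ℂ) • u)
    (T : (H × H) →L[ℂ] (H × H))
    (hT : ∀ w₁ w₂ : H, T (w₁, w₂) =
      (A w₁ + ((lam0 * Real.cos θ : ℝ) : ℂ) • w₁
          + (Complex.exp ((φ : ℂ) * Complex.I) * (lam0 : ℂ) * (Real.sin θ : ℂ)) • w₂
          + ((Real.cos (θ / 2) ^ 2 : ℝ) : ℂ) • V w₁
          + ((1 / 2 : ℂ) * Complex.exp ((φ : ℂ) * Complex.I) * (Real.sin θ : ℂ)) • V w₂,
       (Complex.exp (-(φ : ℂ) * Complex.I) * (lam0 : ℂ) * (Real.sin θ : ℂ)) • w₁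
          + A w₂ - ((lam0 * Real.cos θ : ℝ) : ℂ) • w₂
          + ((1 / 2 : ℂ) * Complex.exp (-(φ : ℂ) * Complex.I) * (Real.sin θ : ℂ)) • V w₁
          + ((Real.sin (θ / 2) ^ 2 : ℝ) : ℂ) • V w₂))
    (ut : H × H)
    (hut : ut = ((Real.cos (θ / 2) : ℂ) • u,
                 (Complex.exp (-(φ : ℂ) * Complex.I) * (Real.sin (θ / 2) : ℂ)) • u)) :
    T ut = (((lam + lam0 : ℝ)) : ℂ) • ut
    ∧ (ut = 0 ↔ u = 0)
    ∧ (u ≠ 0 →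
        Module.End.HasEigenvalue (T : (H × H) →ₗ[ℂ] (H × H)) (((lam + lam0 : ℝ)) : ℂ)) := by
  have hp2 : Complex.sin ((θ:ℂ)/2)^2 + Complex.cos ((θ:ℂ)/2)^2 = 1 :=
    Complex.sin_sq_add_cos_sq _
  have hs2 : Complex.sin (θ:ℂ) = 2 * Complex.sin ((θ:ℂ)/2) * Complex.cos ((θ:ℂ)/2) := by
    have h := Complex.sin_two_mul ((θ:ℂ)/2)
    rw [show 2*((θ:ℂ)/2) = (θ:ℂ) by ring] at h
    exact h
  have hc2 : Complex.cos (θ:ℂ) = Complex.cos ((θ:ℂ)/2)^2 - Complex.sin ((θ:ℂ)/2)^2 := by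
    have h := Complex.cos_two_mul ((θ:ℂ)/2)
    rw [show 2*((θ:ℂ)/2) = (θ:ℂ) by ring] at h
    linear_combination h + hp2
  have hVu : V u = (lam:ℂ) • u - A u := by rw [← hu]; abel
  have hexp : Complex.exp (-(φ:ℂ) * Complex.I) * Complex.exp ((φ:ℂ) * Complex.I) = 1 := by
    rw [← Complex.exp_add]; ring_nf; exact Complex.exp_zero
  have hmain : T ut = (((lam + lam0 : ℝ)) : ℂ) • ut := by
    subst hut
    rw [hT]
    refine Prod.ext ?_ ?_
    · simp only [map_smul, hVu, Prod.smul_mk]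
      match_scalars
      · simp only [hs2, hc2]
        linear_combination (-Complex.cos ((θ:ℂ)/2)) * hp2
          - (Complex.sin ((θ:ℂ)/2)^2 * Complex.cos ((θ:ℂ)/2)) * hexp
      · simp only [hs2, hc2]
        linear_combination (((lam0:ℂ) + lam) * Complex.cos ((θ:ℂ)/2)) * hp2
          + (((2*lam0 + lam : ℂ)) * Complex.cos ((θ:ℂ)/2) * Complex.sin ((θ:ℂ)/2)^2) * hexp
    · simp only [map_smul, hVu, Prod.smul_mk]
      match_scalars
      · simp only [hs2, hc2]
        linear_combination
          (Complex.exp (-(φ:ℂ) * Complex.I) * Complex.sin ((θ:ℂ)/2) * ((lam:ℂ) + lam0)) * hp2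
      · simp only [hs2, hc2]
        linear_combination
          (-(Complex.exp (-(φ:ℂ) * Complex.I) * Complex.sin ((θ:ℂ)/2))) * hp2
  have hiff : ut = 0 ↔ u = 0 := by
    constructor
    · intro h
      rw [hut, Prod.mk_eq_zero] at h
      obtain ⟨h1, h2⟩ := h
      have hE : Complex.exp (-(φ:ℂ) * Complex.I) ≠ 0 := Complex.exp_ne_zero _
      have h2' : (Real.sin (θ/2) : ℂ) • u = 0 := by
        rcases smul_eq_zero.mp h2 with h | h
        · rcases mul_eq_zero.mp h with h | h
          · exact absurd h hE
          · rw [h, zero_smul]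
        · rw [h, smul_zero]
      have hz : ((Real.cos (θ/2) : ℂ)^2 + (Real.sin (θ/2) : ℂ)^2) • u = 0 := by
        rw [add_smul, pow_two, pow_two, mul_smul, mul_smul, h1, h2', smul_zero, smul_zero,
          add_zero]
      rwa [show (Real.cos (θ/2) : ℂ)^2 + (Real.sin (θ/2) : ℂ)^2 = 1 by
          exact_mod_cast Real.cos_sq_add_sin_sq (θ/2), one_smul] at hz
    · intro h; rw [hut, h]; simp
  refine ⟨hmain, hiff, fun hne => ?_⟩
  exact Module.End.hasEigenvalue_of_hasEigenvector
    ⟨by simpa [Module.End.mem_eigenspace_iff] using hmain, fun h => hne (hiff.mp h)⟩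
end

section
/- Let H be a complex Hilbert space, A and V bounded self-adjoint operators on H, and λ₀, θ, φ real numbers. Define the operator 𝒜 + 𝒱₂ on H × H by (𝒜+𝒱₂)(w₁,w₂) = (A w₁ + λ₀(cos θ)·w₁ + e^{iφ} λ₀ (sin θ)·w₂ + cos²(θ/2)·V w₁ + (1/2)e^{iφ}(sin θ)·V w₂ , e^{-iφ} λ₀ (sin θ)·w₁ + A w₂ − λ₀(cos θ)·w₂ + (1/2)e^{-iφ}(sin θ)·V w₁ + sin²(θ/2)·V w₂). Then the spectrum of 𝒜 + 𝒱₂ equals the union ((spectrum of A + V) + λ₀) ∪ ((spectrum of A) − λ₀), where for a set S ⊆ ℂ, S ± λ₀ denotes {s ± λ₀ : s ∈ S}. -/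
open ContinuousLinearMap in
lemma isUnit_prodMap_iff {E F : Type*} [NormedAddCommGroup E] [NormedSpace ℂ E]
    [CompleteSpace E] [NormedAddCommGroup F] [NormedSpace ℂ F] [CompleteSpace F]
    (f : E →L[ℂ] E) (g : F →L[ℂ] F) :
    IsUnit (f.prodMap g) ↔ IsUnit f ∧ IsUnit g := by
  simp only [ContinuousLinearMap.isUnit_iff_bijective]
  exact Prod.map_bijective

open ContinuousLinearMap in
lemma spectrum_prodMap {E F : Type*} [NormedAddCommGroup E] [NormedSpace ℂ E]
    [CompleteSpace E] [NormedAddCommGroup F] [NormedSpace ℂ F] [CompleteSpace F]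
    (f : E →L[ℂ] E) (g : F →L[ℂ] F) :
    spectrum ℂ (f.prodMap g) = spectrum ℂ f ∪ spectrum ℂ g := by
  ext z
  have key : algebraMap ℂ ((E × F) →L[ℂ] (E × F)) z - f.prodMap g
      = (algebraMap ℂ (E →L[ℂ] E) z - f).prodMap (algebraMap ℂ (F →L[ℂ] F) z - g) := by
    ext x <;>
      simp [Algebra.algebraMap_eq_smul_one, Prod.smul_def, ContinuousLinearMap.smul_apply,
        ContinuousLinearMap.sub_apply, ContinuousLinearMap.coe_prodMap',
        ContinuousLinearMap.one_apply, ContinuousLinearMap.comp_apply, Prod.map_apply]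
  simp only [spectrum.mem_iff, Set.mem_union, key, isUnit_prodMap_iff, not_and_or]

/-- Spectral decomposition for 𝒜 + 𝒱₂: the spectrum of the coupled, perturbed operator
equals (spectrum(A+V) + λ₀) ∪ (spectrum(A) − λ₀). -/
theorem spectrum_coupled_V2
    {H : Type*} [NormedAddCommGroup H] [InnerProductSpace ℂ H] [CompleteSpace H]
    (A V : H →L[ℂ] H) (hA : IsSelfAdjoint A) (hV : IsSelfAdjoint V)
    (lam0 θ φ : ℝ)
    (T : (H × H) →L[ℂ] (H × H))
    (hT : ∀ w₁ w₂ : H, T (w₁, w₂) =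
      (A w₁ + ((lam0 * Real.cos θ : ℝ) : ℂ) • w₁
          + (Complex.exp ((φ : ℂ) * Complex.I) * (lam0 : ℂ) * (Real.sin θ : ℂ)) • w₂
          + ((Real.cos (θ / 2) ^ 2 : ℝ) : ℂ) • V w₁
          + ((1 / 2 : ℂ) * Complex.exp ((φ : ℂ) * Complex.I) * (Real.sin θ : ℂ)) • V w₂,
       (Complex.exp (-(φ : ℂ) * Complex.I) * (lam0 : ℂ) * (Real.sin θ : ℂ)) • w₁
          + A w₂ - ((lam0 * Real.cos θ : ℝ) : ℂ) • w₂
          + ((1 / 2 : ℂ) * Complex.exp (-(φ : ℂ) * Complex.I) * (Real.sin θ : ℂ)) • V w₁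
          + ((Real.sin (θ / 2) ^ 2 : ℝ) : ℂ) • V w₂)) :
    spectrum ℂ T =
      ((fun s : ℂ => s + (lam0 : ℂ)) '' spectrum ℂ (A + V))
        ∪ ((fun s : ℂ => s - (lam0 : ℂ)) '' spectrum ℂ A) := by
  classical
  have hEE' : Complex.exp ((φ : ℂ) * Complex.I) * Complex.exp (-(φ : ℂ) * Complex.I) = 1 := by
    rw [← Complex.exp_add]; ring_nf; exact Complex.exp_zero
  have hcs : (Real.cos (θ / 2) : ℂ) ^ 2 + (Real.sin (θ / 2) : ℂ) ^ 2 = 1 := by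
    norm_cast; rw [add_comm]; exact Real.sin_sq_add_cos_sq _
  have hsinθ : (Real.sin θ : ℂ) = 2 * (Real.sin (θ / 2) : ℂ) * (Real.cos (θ / 2) : ℂ) := by
    have : Real.sin θ = 2 * Real.sin (θ / 2) * Real.cos (θ / 2) := by
      rw [← Real.sin_two_mul, show (2:ℝ) * (θ / 2) = θ by ring]
    exact_mod_cast this
  have hcosθ : (Real.cos θ : ℂ) = (Real.cos (θ / 2) : ℂ) ^ 2 - (Real.sin (θ / 2) : ℂ) ^ 2 := by
    have : Real.cos θ = Real.cos (θ / 2) ^ 2 - Real.sin (θ / 2) ^ 2 := by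
      have h2 := Real.cos_two_mul (θ / 2)
      rw [show 2 * (θ / 2) = θ by ring] at h2
      linarith [Real.sin_sq_add_cos_sq (θ / 2)]
    exact_mod_cast this
  have hcsC : Complex.cos ((θ : ℂ) / 2) ^ 2 + Complex.sin ((θ : ℂ) / 2) ^ 2 = 1 := by
    linear_combination Complex.sin_sq_add_cos_sq ((θ : ℂ) / 2)
  have hsinC : Complex.sin (θ : ℂ)
      = 2 * Complex.sin ((θ : ℂ) / 2) * Complex.cos ((θ : ℂ) / 2) := by
    rw [← Complex.sin_two_mul, show 2 * ((θ : ℂ) / 2) = (θ : ℂ) by ring]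
  have hcosC : Complex.cos (θ : ℂ)
      = Complex.cos ((θ : ℂ) / 2) ^ 2 - Complex.sin ((θ : ℂ) / 2) ^ 2 := by
    have h2 := Complex.cos_two_mul ((θ : ℂ) / 2)
    rw [show 2 * ((θ : ℂ) / 2) = (θ : ℂ) by ring] at h2
    linear_combination h2 + hcsC
  set f1 := ContinuousLinearMap.fst ℂ H H with hf1
  set f2 := ContinuousLinearMap.snd ℂ H H with hf2
  set U : (H × H) →L[ℂ] (H × H) :=
    ((Real.cos (θ / 2) : ℂ) • f1
        - (Complex.exp ((φ : ℂ) * Complex.I) * (Real.sin (θ / 2) : ℂ)) • f2).prod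
      ((Complex.exp (-(φ : ℂ) * Complex.I) * (Real.sin (θ / 2) : ℂ)) • f1
        + (Real.cos (θ / 2) : ℂ) • f2) with hU
  set W : (H × H) →L[ℂ] (H × H) :=
    ((Real.cos (θ / 2) : ℂ) • f1
        + (Complex.exp ((φ : ℂ) * Complex.I) * (Real.sin (θ / 2) : ℂ)) • f2).prod
      (-(Complex.exp (-(φ : ℂ) * Complex.I) * (Real.sin (θ / 2) : ℂ)) • f1
        + (Real.cos (θ / 2) : ℂ) • f2) with hW
  have hUW : U * W = 1 := by
    refine ContinuousLinearMap.ext fun w => ?_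
    obtain ⟨x, y⟩ := w
    rw [ContinuousLinearMap.mul_apply, hU, hW]
    simp only [ContinuousLinearMap.prod_apply, ContinuousLinearMap.add_apply,
      ContinuousLinearMap.sub_apply, ContinuousLinearMap.neg_apply,
      ContinuousLinearMap.smul_apply, ContinuousLinearMap.coe_fst',
      ContinuousLinearMap.coe_snd', ContinuousLinearMap.one_apply, hf1, hf2,
      Prod.mk.injEq]
    constructor <;> match_scalars <;>
      first
          | ring1
          | linear_combination hcsC + Complex.sin ((θ : ℂ) / 2) ^ 2 * hEE'
          | linear_combination -hcsC - Complex.sin ((θ : ℂ) / 2) ^ 2 * hEE'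
  have hWU : W * U = 1 := by
    refine ContinuousLinearMap.ext fun w => ?_
    obtain ⟨x, y⟩ := w
    rw [ContinuousLinearMap.mul_apply, hU, hW]
    simp only [ContinuousLinearMap.prod_apply, ContinuousLinearMap.add_apply,
      ContinuousLinearMap.sub_apply, ContinuousLinearMap.neg_apply,
      ContinuousLinearMap.smul_apply, ContinuousLinearMap.coe_fst',
      ContinuousLinearMap.coe_snd', ContinuousLinearMap.one_apply, hf1, hf2,
      Prod.mk.injEq]
    constructor <;> match_scalars <;>
      first
          | ring1
          | linear_combination hcsC + Complex.sin ((θ : ℂ) / 2) ^ 2 * hEE'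
          | linear_combination -hcsC - Complex.sin ((θ : ℂ) / 2) ^ 2 * hEE'
  set D : (H × H) →L[ℂ] (H × H) :=
    ((A + V) + algebraMap ℂ (H →L[ℂ] H) lam0).prodMap
      (A - algebraMap ℂ (H →L[ℂ] H) lam0) with hD
  have hTD : T = U * D * W := by
    refine ContinuousLinearMap.ext fun w => ?_
    obtain ⟨w₁, w₂⟩ := w
    rw [hT w₁ w₂]
    simp only [ContinuousLinearMap.mul_apply, hU, hW, hD,
      ContinuousLinearMap.coe_prodMap', Prod.map_apply,
      ContinuousLinearMap.prod_apply, ContinuousLinearMap.add_apply,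
      ContinuousLinearMap.sub_apply, ContinuousLinearMap.neg_apply,
      ContinuousLinearMap.smul_apply, ContinuousLinearMap.coe_fst',
      ContinuousLinearMap.coe_snd', ContinuousLinearMap.one_apply,
      Algebra.algebraMap_eq_smul_one, map_add, map_smul, map_sub, map_neg,
      hf1, hf2, Prod.mk.injEq]
    constructor <;> match_scalars <;>
      first
          | ring1
          | linear_combination hcsC + Complex.sin ((θ : ℂ) / 2) ^ 2 * hEE'
          | linear_combination -hcsC - Complex.sin ((θ : ℂ) / 2) ^ 2 * hEE'
          | linear_combination Complex.sin ((θ : ℂ) / 2) ^ 2 * hEE'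
          | linear_combination -(Complex.sin ((θ : ℂ) / 2) ^ 2) * hEE'
          | linear_combination (lam0 : ℂ) * hcosC + (lam0 : ℂ) * Complex.sin ((θ : ℂ) / 2) ^ 2 * hEE'
          | linear_combination -(lam0 : ℂ) * hcosC - (lam0 : ℂ) * Complex.sin ((θ : ℂ) / 2) ^ 2 * hEE'
          | linear_combination Complex.exp ((φ : ℂ) * Complex.I) * (lam0 : ℂ) * hsinC
          | linear_combination Complex.exp (-(φ : ℂ) * Complex.I) * (lam0 : ℂ) * hsinC
          | linear_combination (1 / 2 : ℂ) * Complex.exp ((φ : ℂ) * Complex.I) * hsinC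
          | linear_combination (1 / 2 : ℂ) * Complex.exp (-(φ : ℂ) * Complex.I) * hsinC
          | linear_combination (1 / 2 : ℂ) * Complex.exp ((φ : ℂ) * Complex.I) * hsinC
              + Complex.sin ((θ : ℂ) / 2) ^ 2 * hEE'
          | linear_combination (1 / 2 : ℂ) * Complex.exp ((φ : ℂ) * Complex.I) * hsinC
              - Complex.sin ((θ : ℂ) / 2) ^ 2 * hEE'
          | linear_combination (1 / 2 : ℂ) * Complex.exp (-(φ : ℂ) * Complex.I) * hsinC
              + Complex.sin ((θ : ℂ) / 2) ^ 2 * hEE'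
          | linear_combination (1 / 2 : ℂ) * Complex.exp (-(φ : ℂ) * Complex.I) * hsinC
              - Complex.sin ((θ : ℂ) / 2) ^ 2 * hEE'
          | linear_combination Complex.exp ((φ : ℂ) * Complex.I) * (lam0 : ℂ) * hsinC
              + (lam0 : ℂ) * Complex.sin ((θ : ℂ) / 2) ^ 2 * hEE'
          | linear_combination Complex.exp ((φ : ℂ) * Complex.I) * (lam0 : ℂ) * hsinC
              - (lam0 : ℂ) * Complex.sin ((θ : ℂ) / 2) ^ 2 * hEE'
          | linear_combination Complex.exp (-(φ : ℂ) * Complex.I) * (lam0 : ℂ) * hsinC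
              + (lam0 : ℂ) * Complex.sin ((θ : ℂ) / 2) ^ 2 * hEE'
          | linear_combination Complex.exp (-(φ : ℂ) * Complex.I) * (lam0 : ℂ) * hsinC
              - (lam0 : ℂ) * Complex.sin ((θ : ℂ) / 2) ^ 2 * hEE'
          | linear_combination Complex.exp (-(φ : ℂ) * Complex.I) * (lam0 : ℂ) * hsinC
              + 2 * (lam0 : ℂ) * Complex.sin ((θ : ℂ) / 2) ^ 2 * hEE'
          | linear_combination Complex.exp ((φ : ℂ) * Complex.I) * (lam0 : ℂ) * hsinC
              + 2 * (lam0 : ℂ) * Complex.sin ((θ : ℂ) / 2) ^ 2 * hEE'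
  have hspecTD : spectrum ℂ T = spectrum ℂ D := by
    rw [hTD]
    let u : ((H × H) →L[ℂ] (H × H))ˣ := ⟨U, W, hUW, hWU⟩
    have h1 : U * D * W = ↑u * D * ↑u⁻¹ := rfl
    rw [h1, spectrum.units_conjugate]
  rw [hspecTD, hD, spectrum_prodMap]
  congr 1
  · rw [← spectrum.add_singleton_eq, Set.add_singleton]
  · rw [← spectrum.sub_singleton_eq, Set.sub_singleton]
end

section
/- Let n be a positive integer, M and N arbitrary n×n complex matrices, and θ, φ real numbers. Then the determinant of the 2n×2n block matrix [[M + (cos θ)·N , e^{iφ}(sin θ)·N],[e^{-iφ}(sin θ)·N , M − (cos θ)·N]] equals det(M + N) · det(M − N). -/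
/-- Reducibility of the Floquet determinant for two coupled systems:
det [[M + cosθ·N, e^{iφ}sinθ·N],[e^{-iφ}sinθ·N, M − cosθ·N]] = det(M+N)·det(M−N). -/
theorem det_fromBlocks_coupled
    (n : ℕ) (hn : 0 < n) (M N : Matrix (Fin n) (Fin n) ℂ) (θ φ : ℝ) :
    (Matrix.fromBlocks
        (M + (Real.cos θ : ℂ) • N)
        ((Complex.exp ((φ : ℂ) * Complex.I) * (Real.sin θ : ℂ)) • N)
        ((Complex.exp (-(φ : ℂ) * Complex.I) * (Real.sin θ : ℂ)) • N)
        (M - (Real.cos θ : ℂ) • N)).det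
      = (M + N).det * (M - N).det := by
  set c : ℂ := (Real.cos (θ / 2) : ℂ) with hc
  set t : ℂ := (Real.sin (θ / 2) : ℂ) with ht
  set b : ℂ := Complex.exp ((φ : ℂ) * Complex.I) with hbdef
  set b' : ℂ := Complex.exp (-(φ : ℂ) * Complex.I) with hb'def
  have hbb : b * b' = 1 := by
    rw [hbdef, hb'def, ← Complex.exp_add]
    ring_nf
    exact Complex.exp_zero
  have h1 : c ^ 2 + t ^ 2 = 1 := by
    rw [hc, ht]
    exact_mod_cast Real.cos_sq_add_sin_sq (θ / 2)
  have h2 : c ^ 2 - t ^ 2 = (Real.cos θ : ℂ) := by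
    have hr : Real.cos θ = 2 * Real.cos (θ / 2) ^ 2 - 1 := by
      have := Real.cos_two_mul (θ / 2)
      rw [show 2 * (θ / 2) = θ by ring] at this
      linarith
    have hr' : (Real.cos θ : ℂ) = 2 * c ^ 2 - 1 := by
      rw [hc]; exact_mod_cast hr
    rw [hr']; linear_combination -h1
  have h3 : 2 * t * c = (Real.sin θ : ℂ) := by
    rw [hc, ht]
    have : 2 * Real.sin (θ / 2) * Real.cos (θ / 2) = Real.sin θ := by
      rw [← Real.sin_two_mul]
      ring_nf
    exact_mod_cast this
  have h2' : c ^ 2 - t ^ 2 = Complex.cos (θ : ℂ) := by rw [← Complex.ofReal_cos]; exact h2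
  have h3' : 2 * t * c = Complex.sin (θ : ℂ) := by rw [← Complex.ofReal_sin]; exact h3
  set P : Matrix (Fin n ⊕ Fin n) (Fin n ⊕ Fin n) ℂ :=
    Matrix.fromBlocks (c • 1) ((-(b * t)) • 1) ((b' * t) • 1) (c • 1) with hP
  set Q : Matrix (Fin n ⊕ Fin n) (Fin n ⊕ Fin n) ℂ :=
    Matrix.fromBlocks (c • 1) ((b * t) • 1) ((-(b' * t)) • 1) (c • 1) with hQ
  have hPQ : P * Q = 1 := by
    rw [hP, hQ, Matrix.fromBlocks_multiply, ← Matrix.fromBlocks_one]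
    simp only [Matrix.smul_mul, Matrix.mul_smul, Matrix.one_mul, smul_smul, ← add_smul]
    rw [Matrix.fromBlocks_inj]
    refine ⟨?_, ?_, ?_, ?_⟩
    · rw [show c * c + -(b' * t) * -(b * t) = c ^ 2 + t ^ 2 * (b * b') by ring, hbb,
        show c ^ 2 + t ^ 2 * 1 = c ^ 2 + t ^ 2 by ring, h1, one_smul]
    · rw [show b * t * c + c * -(b * t) = 0 by ring, zero_smul]
    · rw [show c * (b' * t) + -(b' * t) * c = 0 by ring, zero_smul]
    · rw [show b * t * (b' * t) + c * c = c ^ 2 + t ^ 2 * (b * b') by ring, hbb,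
        show c ^ 2 + t ^ 2 * 1 = c ^ 2 + t ^ 2 by ring, h1, one_smul]
  have key : Matrix.fromBlocks
        (M + (Real.cos θ : ℂ) • N)
        ((b * (Real.sin θ : ℂ)) • N)
        ((b' * (Real.sin θ : ℂ)) • N)
        (M - (Real.cos θ : ℂ) • N)
      = P * Matrix.fromBlocks (M + N) 0 0 (M - N) * Q := by
    rw [hP, hQ, Matrix.fromBlocks_multiply, Matrix.fromBlocks_multiply]
    simp only [Matrix.smul_mul, Matrix.mul_smul, Matrix.one_mul, Matrix.mul_one,
      Matrix.mul_zero, Matrix.zero_mul, smul_zero, add_zero, zero_add, smul_smul]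
    rw [Matrix.fromBlocks_inj]
    refine ⟨?_, ?_, ?_, ?_⟩
    · match_scalars
      · linear_combination -h1 - t ^ 2 * hbb
      · linear_combination -h2' + t ^ 2 * hbb
    · match_scalars
      · linear_combination (-b) * h3'
      · ring
    · match_scalars
      · linear_combination (-b') * h3'
      · ring
    · match_scalars
      · linear_combination -h1 - t ^ 2 * hbb
      · linear_combination h2' - t ^ 2 * hbb
  rw [key, Matrix.det_mul, Matrix.det_mul, Matrix.det_fromBlocks_zero₂₁]
  have hdet : P.det * Q.det = 1 := by rw [← Matrix.det_mul, hPQ, Matrix.det_one]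
  calc P.det * ((M + N).det * (M - N).det) * Q.det
      = (P.det * Q.det) * ((M + N).det * (M - N).det) := by ring
    _ = (M + N).det * (M - N).det := by rw [hdet, one_mul]
end

section
/- Let m and n be positive integers, M and N arbitrary n×n complex matrices, U a unitary m×m complex matrix, Λ : Fin m → ℂ, and K = U · diag(Λ) · U* (where U* is the conjugate transpose). Then the determinant of the (mn)×(mn) matrix (I_m ⊗ M) + (K ⊗ N), whose (i,j)-block (for i,j ∈ Fin m) is δ_{ij}·M + K(i,j)·N, equals the product over i ∈ Fin m of det(M + Λ(i)·N). -/
open scoped Kronecker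

open Matrix

lemma det_one_kron_add_diag_kron (m n : ℕ)
    (M N : Matrix (Fin n) (Fin n) ℂ) (Λ : Fin m → ℂ) :
    ((1 : Matrix (Fin m) (Fin m) ℂ) ⊗ₖ M + (Matrix.diagonal Λ) ⊗ₖ N).det
      = ∏ i : Fin m, (M + Λ i • N).det := by
  have h : (1 : Matrix (Fin m) (Fin m) ℂ) ⊗ₖ M + (Matrix.diagonal Λ) ⊗ₖ N
      = (Matrix.blockDiagonal fun i => M + Λ i • N).submatrix
          (Equiv.prodComm (Fin m) (Fin n)) (Equiv.prodComm (Fin m) (Fin n)) := by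
    ext ⟨i, j⟩ ⟨k, l⟩
    simp [Matrix.blockDiagonal_apply, Matrix.kroneckerMap_apply, Matrix.one_apply,
      Matrix.diagonal_apply, Matrix.add_apply]
    by_cases hik : i = k <;> simp [hik]
  rw [h, Matrix.det_submatrix_equiv_self, Matrix.det_blockDiagonal]

/-- Reducibility of the Floquet determinant for m coupled systems:
det(I_m ⊗ M + K ⊗ N) = ∏ᵢ det(M + Λᵢ·N) when K = U·diag(Λ)·U* with U unitary. -/
theorem det_kronecker_coupled
    (m n : ℕ) (hm : 0 < m) (hn : 0 < n)
    (M N : Matrix (Fin n) (Fin n) ℂ)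
    (U : Matrix (Fin m) (Fin m) ℂ)
    (hU : U ∈ Matrix.unitaryGroup (Fin m) ℂ)
    (Λ : Fin m → ℂ) :
    ((1 : Matrix (Fin m) (Fin m) ℂ) ⊗ₖ M
        + (U * Matrix.diagonal Λ * U.conjTranspose) ⊗ₖ N).det
      = ∏ i : Fin m, (M + Λ i • N).det := by
  have hUU : U * U.conjTranspose = 1 := (Matrix.mem_unitaryGroup_iff.mp hU)
  have key : (1 : Matrix (Fin m) (Fin m) ℂ) ⊗ₖ M
        + (U * Matrix.diagonal Λ * U.conjTranspose) ⊗ₖ N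
      = (U ⊗ₖ (1 : Matrix (Fin n) (Fin n) ℂ))
          * ((1 : Matrix (Fin m) (Fin m) ℂ) ⊗ₖ M + (Matrix.diagonal Λ) ⊗ₖ N)
          * (U.conjTranspose ⊗ₖ (1 : Matrix (Fin n) (Fin n) ℂ)) := by
    rw [Matrix.mul_add, Matrix.add_mul, ← Matrix.mul_kronecker_mul,
      ← Matrix.mul_kronecker_mul, ← Matrix.mul_kronecker_mul, ← Matrix.mul_kronecker_mul]
    simp [hUU, Matrix.mul_assoc]
  rw [key, Matrix.det_mul, Matrix.det_mul]
  have : ((U ⊗ₖ (1 : Matrix (Fin n) (Fin n) ℂ)).det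
      * (U.conjTranspose ⊗ₖ (1 : Matrix (Fin n) (Fin n) ℂ)).det) = 1 := by
    rw [← Matrix.det_mul, ← Matrix.mul_kronecker_mul, hUU, mul_one,
      Matrix.one_kronecker_one, Matrix.det_one]
  calc (U ⊗ₖ (1:Matrix (Fin n) (Fin n) ℂ)).det
        * ((1:Matrix (Fin m) (Fin m) ℂ) ⊗ₖ M + (Matrix.diagonal Λ) ⊗ₖ N).det
        * (U.conjTranspose ⊗ₖ (1:Matrix (Fin n) (Fin n) ℂ)).det
      = ((U ⊗ₖ (1:Matrix (Fin n) (Fin n) ℂ)).det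
          * (U.conjTranspose ⊗ₖ (1:Matrix (Fin n) (Fin n) ℂ)).det)
        * ((1:Matrix (Fin m) (Fin m) ℂ) ⊗ₖ M + (Matrix.diagonal Λ) ⊗ₖ N).det := by ring
    _ = ((1:Matrix (Fin m) (Fin m) ℂ) ⊗ₖ M + (Matrix.diagonal Λ) ⊗ₖ N).det := by
          rw [this, one_mul]
    _ = ∏ i : Fin m, (M + Λ i • N).det := det_one_kron_add_diag_kron m n M N Λ
end

section
/- Let n be a positive integer and let a : ℤⁿ → ℂ be finitely supported such that a(g) ≠ 0 for at least two distinct g ∈ ℤⁿ. Then there exists z = (z₁, …, zₙ) ∈ ℂⁿ with zᵢ ≠ 0 for every i, such that Σ_{g ∈ ℤⁿ} a(g)·z₁^{g₁}·z₂^{g₂}⋯zₙ^{gₙ} = 0 (integer powers, a finite sum). -/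
lemma aux_base_repr (M : ℤ) : ∀ (n : ℕ) (d : Fin n → ℤ), (∀ i, |d i| < M) →
    (∑ i, d i * M ^ (i : ℕ)) = 0 → ∀ i, d i = 0 := by
  intro n
  induction n with
  | zero => intro d _ _ i; exact i.elim0
  | succ n ih =>
    intro d hd hsum i
    have hM : 0 < M := lt_of_le_of_lt (abs_nonneg _) (hd 0)
    rw [Fin.sum_univ_succ] at hsum
    have h2 : ∑ i : Fin n, d i.succ * M ^ ((i.succ : Fin (n+1)) : ℕ)
        = M * ∑ i : Fin n, d i.succ * M ^ (i : ℕ) := by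
      rw [Finset.mul_sum]
      refine Finset.sum_congr rfl fun j _ => ?_
      have : ((j.succ : Fin (n+1)) : ℕ) = (j : ℕ) + 1 := rfl
      rw [this, pow_succ]; ring
    rw [h2] at hsum
    have h0 : d 0 = 0 := by
      refine Int.eq_zero_of_abs_lt_dvd ⟨-∑ i : Fin n, d i.succ * M ^ (i : ℕ), ?_⟩ (hd 0)
      simp at hsum ⊢; linarith
    have hrest : ∑ i : Fin n, d i.succ * M ^ (i : ℕ) = 0 := by
      have := hsum
      rw [h0] at this
      simp at this
      rcases this with h | h
      · exact absurd h hM.ne'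
      · exact h
    induction i using Fin.cases with
    | zero => exact h0
    | succ j => exact ih (fun k => d k.succ) (fun k => hd k.succ) hrest j

lemma aux_prod_zpow (u : ℂˣ) : ∀ (n : ℕ) (c : Fin n → ℤ), ∏ i, u ^ c i = u ^ (∑ i, c i) := by
  intro n
  induction n with
  | zero => simp
  | succ n ih =>
    intro c
    rw [Fin.prod_univ_succ, Fin.sum_univ_succ, zpow_add, ih]

/-- A Laurent polynomial in n variables with at least two nonzero terms vanishes
somewhere on the algebraic torus (ℂ∖{0})ⁿ. -/
theorem laurent_polynomial_vanishes_on_torus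
    (n : ℕ) (hn : 0 < n)
    (a : (Fin n → ℤ) → ℂ)
    (ha : (Function.support a).Finite)
    (htwo : ∃ g₁ g₂ : Fin n → ℤ, g₁ ≠ g₂ ∧ a g₁ ≠ 0 ∧ a g₂ ≠ 0) :
    ∃ z : Fin n → ℂ, (∀ i, z i ≠ 0) ∧
      (∑ᶠ g : Fin n → ℤ, a g * ∏ i, z i ^ g i) = 0 := by
  classical
  obtain ⟨g₁, g₂, hne, hg₁, hg₂⟩ := htwo
  set S : Finset (Fin n → ℤ) := ha.toFinset with hS
  have hmem : ∀ g, g ∈ S ↔ a g ≠ 0 := fun g => by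
    simp [hS, Set.Finite.mem_toFinset, Function.mem_support]
  have hg₁S : g₁ ∈ S := (hmem g₁).2 hg₁
  have hg₂S : g₂ ∈ S := (hmem g₂).2 hg₂
  -- bound on exponents
  obtain ⟨B, hbound⟩ : ∃ B : ℕ, ∀ g ∈ S, ∀ i, |g i| ≤ (B : ℤ) := by
    refine ⟨S.sup (fun g => Finset.univ.sup fun i => (g i).natAbs), fun g hg i => ?_⟩
    have h1 : (g i).natAbs ≤ S.sup (fun g => Finset.univ.sup fun i => (g i).natAbs) :=
      le_trans (Finset.le_sup (f := fun i => (g i).natAbs) (Finset.mem_univ i))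
        (Finset.le_sup (f := fun g => Finset.univ.sup fun i => (g i).natAbs) hg)
    calc |g i| = ((g i).natAbs : ℤ) := Int.abs_eq_natAbs _
    _ ≤ _ := by exact_mod_cast h1
  obtain ⟨M, hM⟩ : ∃ M : ℤ, M = 2 * B + 1 := ⟨_, rfl⟩
  set φ : (Fin n → ℤ) → ℤ := fun g => ∑ i, g i * M ^ (i : ℕ) with hφ
  have hinj : Set.InjOn φ S := by
    intro g hg h hh hgh
    have hd : ∀ i, |g i - h i| < M := by
      intro i
      have hb1 := hbound g (by simpa using hg) i
      have hb2 := hbound h (by simpa using hh) i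
      calc |g i - h i| ≤ |g i| + |h i| := abs_sub _ _
      _ < M := by omega
    have hzero : ∑ i, (g i - h i) * M ^ (i : ℕ) = 0 := by
      simp only [sub_mul, Finset.sum_sub_distrib]
      rw [hφ] at hgh
      simp only [hgh, sub_self]
    have hz := aux_base_repr M n (fun i => g i - h i) hd hzero
    funext i
    exact sub_eq_zero.mp (hz i)
  -- minimum exponent
  have hSne : (S.image φ).Nonempty := ⟨φ g₁, Finset.mem_image_of_mem _ hg₁S⟩
  set m : ℤ := (S.image φ).min' hSne with hm
  have hmle : ∀ g ∈ S, m ≤ φ g := fun g hg =>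
    Finset.min'_le _ _ (Finset.mem_image_of_mem _ hg)
  obtain ⟨g₀, hg₀S, hg₀⟩ := Finset.mem_image.1 ((S.image φ).min'_mem hSne)
  rw [← hm] at hg₀
  set e : (Fin n → ℤ) → ℕ := fun g => (φ g - m).toNat with he
  have he_inj : ∀ g ∈ S, ∀ h ∈ S, e g = e h → g = h := by
    intro g hg h hh hgh
    apply hinj hg hh
    have t1 := Int.toNat_of_nonneg (sub_nonneg.2 (hmle g hg))
    have t2 := Int.toNat_of_nonneg (sub_nonneg.2 (hmle h hh))
    have hgh' : (φ g - m).toNat = (φ h - m).toNat := hgh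
    omega
  -- polynomial
  set p : Polynomial ℂ := ∑ g ∈ S, Polynomial.C (a g) * Polynomial.X ^ (e g) with hp
  have hcoeff : ∀ g ∈ S, p.coeff (e g) = a g := by
    intro g hg
    rw [hp, Polynomial.finset_sum_coeff]
    rw [Finset.sum_eq_single g]
    · simp
    · intro h hh hne'
      have hnee : e g ≠ e h := fun hc => hne' (he_inj h hh g hg hc.symm)
      simp [Polynomial.coeff_X_pow, hnee]
    · intro h; exact absurd hg h
  have he_g₀ : e g₀ = 0 := by simp [he, hg₀]
  have hc0 : p.coeff 0 ≠ 0 := by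
    rw [← he_g₀, hcoeff g₀ hg₀S]
    exact (hmem g₀).1 hg₀S
  -- p has positive degree
  have hdeg : 0 < p.degree := by
    have hne12 : e g₁ ≠ e g₂ := fun hc => hne (he_inj g₁ hg₁S g₂ hg₂S hc)
    have hex : ∃ g ∈ S, 0 < e g := by
      rcases Nat.eq_zero_or_pos (e g₁) with h | h
      · exact ⟨g₂, hg₂S, by omega⟩
      · exact ⟨g₁, hg₁S, h⟩
    obtain ⟨g, hgS, hg⟩ := hex
    have hled : (e g : WithBot ℕ) ≤ p.degree := by
      apply Polynomial.le_degree_of_ne_zero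
      rw [hcoeff g hgS]; exact (hmem g).1 hgS
    calc (0 : WithBot ℕ) < (e g : WithBot ℕ) := by exact_mod_cast hg
    _ ≤ p.degree := hled
  obtain ⟨t, ht⟩ := Complex.exists_root hdeg
  have ht0 : t ≠ 0 := by
    rintro rfl
    rw [Polynomial.IsRoot, ← Polynomial.coeff_zero_eq_eval_zero] at ht
    exact hc0 ht
  set u : ℂˣ := Units.mk0 t ht0 with hu
  refine ⟨fun i => t ^ (M ^ (i : ℕ)), fun i => zpow_ne_zero _ ht0, ?_⟩
  -- rewrite the finsum as a finite sum over S
  have hsupp : (Function.support fun g : Fin n → ℤ =>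
      a g * ∏ i : Fin n, (t ^ (M ^ (i : ℕ)) : ℂ) ^ g i) ⊆ ↑S := by
    intro g hg
    simp only [Function.mem_support] at hg
    have hag : a g ≠ 0 := fun h => hg (by simp [h])
    simpa [hmem] using hag
  rw [finsum_eq_sum_of_support_subset _ hsupp]
  -- each term: a g * t ^ φ g
  have hterm : ∀ g ∈ S, a g * ∏ i : Fin n, (t ^ (M ^ (i : ℕ)) : ℂ) ^ g i
      = a g * t ^ m * t ^ (e g) := by
    intro g hg
    have h1 : ∏ i : Fin n, (t ^ (M ^ (i : ℕ)) : ℂ) ^ g i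
        = ((∏ i : Fin n, (u ^ (M ^ (i : ℕ))) ^ g i : ℂˣ) : ℂ) := by
      push_cast [hu]
      rfl
    have h2 : (∏ i : Fin n, (u ^ (M ^ (i : ℕ))) ^ g i : ℂˣ) = u ^ φ g := by
      have hz : ∀ i : Fin n, (u ^ (M ^ (i : ℕ))) ^ g i = u ^ (g i * M ^ (i : ℕ)) := by
        intro i
        rw [mul_comm, zpow_mul]
      simp_rw [hz]
      exact aux_prod_zpow u n _
    have h3 : (u : ℂ) ^ φ g = t ^ m * t ^ (e g : ℤ) := by
      have h4 : φ g = m + (e g : ℤ) := by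
        have t1 := Int.toNat_of_nonneg (sub_nonneg.2 (hmle g hg))
        have t2 : (e g : ℤ) = ((φ g - m).toNat : ℤ) := rfl
        omega
      rw [show ((u : ℂ)) = t from rfl, h4, zpow_add₀ ht0]
    rw [h1, h2]
    push_cast
    rw [h3, zpow_natCast]
    ring
  rw [Finset.sum_congr rfl hterm]
  have hfin : ∑ g ∈ S, a g * t ^ m * t ^ (e g) = t ^ m * p.eval t := by
    rw [hp, Polynomial.eval_finset_sum, Finset.mul_sum]
    refine Finset.sum_congr rfl fun g hg => ?_
    simp; ring
  rw [hfin, Polynomial.IsRoot.eq_zero ht, mul_zero]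
end

section
/- Let n be a positive integer, a : ℤⁿ → ℂ finitely supported with a(−h) = conjugate(a(h)) for all h and with a(h) ≠ 0 for at least one h ≠ 0, and let A be a bounded linear operator on ℓ²(ℤⁿ) with action (A u)(g) = Σ_h a(h)·u(g+h). Let λ be a real number not in the spectrum of A, and let u ∈ ℓ²(ℤⁿ) satisfy (A − λI)u = δ (the Kronecker delta at 0). Then the support {g ∈ ℤⁿ : u(g) ≠ 0} of u is infinite. -/
/-!
Put `b = a - λ δ₀`, so that the resolvent equation says that the correlation
`g ↦ ∑ₕ b h * u (g + h)` is the Kronecker delta. The symmetry `a (-h) = conj (a h)` puts both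
`h₀` and `-h₀` in the support of `b`, so `b` is not a monomial. Since `ℤⁿ` has the two-unique-sums
property (it is totally orderable), the correlation of a finitely supported non-monomial `b` with a
nonzero finitely supported `u` has at least two nonzero values, hence cannot be a delta.
-/

open Function
open scoped Pointwise

section Correlation

variable {G R : Type*} [AddGroup G] [DecidableEq G]

theorem finsum_mul_add_eq_mul_of_uniqueAdd [Semiring R] {b u : G → R}
    (hb : b.support.Finite) (hu : u.support.Finite) {k₀ h₀ : G}
    (huniq : UniqueAdd hu.toFinset (-hb.toFinset) k₀ h₀) :
    ∑ᶠ h, b h * u (k₀ + h₀ + h) = b (-h₀) * u k₀ := by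
  rw [finsum_eq_single _ (-h₀), add_neg_cancel_right]
  intro h hne
  by_contra hprod
  have hbh : h ∈ hb.toFinset := by simpa using left_ne_zero_of_mul hprod
  have huh : k₀ + h₀ + h ∈ hu.toFinset := by simpa using right_ne_zero_of_mul hprod
  have hsum : k₀ + h₀ + h + -h = k₀ + h₀ := add_neg_cancel_right _ _
  have := (huniq huh (Finset.neg_mem_neg hbh) hsum).2
  exact hne (by rw [← this, neg_neg])

theorem exists_ne_finsum_mul_add_ne_zero [Semiring R] [NoZeroDivisors R] [TwoUniqueSums G]
    {b u : G → R} (hb : b.support.Finite) (hu : u.support.Finite) (hb₂ : b.support.Nontrivial)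
    (hu₀ : u.support.Nonempty) :
    ∃ g₁ g₂, g₁ ≠ g₂ ∧ ∑ᶠ h, b h * u (g₁ + h) ≠ 0 ∧ ∑ᶠ h, b h * u (g₂ + h) ≠ 0 := by
  have hcard : 1 < (hu.toFinset).card * (-hb.toFinset).card := by
    rw [Finset.card_neg]
    refine Nat.one_lt_mul_iff.mpr ⟨?_, ?_, Or.inr ?_⟩
    · exact Finset.card_pos.mpr (hu.toFinset_nonempty.mpr hu₀)
    · exact Finset.card_pos.mpr (hb.toFinset_nonempty.mpr hb₂.nonempty)
    · exact Finset.one_lt_card_iff_nontrivial.mpr (hb.toFinset_nontrivial.mpr hb₂)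
  obtain ⟨⟨k₁, h₁⟩, hp₁, ⟨k₂, h₂⟩, hp₂, hne, huniq₁, huniq₂⟩ :=
    TwoUniqueSums.uniqueAdd_of_one_lt_card hcard
  rw [Finset.mem_product] at hp₁ hp₂
  have hcoeff_ne_zero : ∀ {k h : G}, k ∈ hu.toFinset → h ∈ -hb.toFinset → b (-h) * u k ≠ 0 :=
    fun hk hh ↦ mul_ne_zero (by simpa using Finset.neg_mem_neg hh) (by simpa using hk)
  refine ⟨k₁ + h₁, k₂ + h₂, fun heq ↦ hne ?_, ?_, ?_⟩
  · obtain ⟨rfl, rfl⟩ := huniq₁ hp₂.1 hp₂.2 heq.symm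
    rfl
  · rw [finsum_mul_add_eq_mul_of_uniqueAdd hb hu huniq₁]
    exact hcoeff_ne_zero hp₁.1 hp₁.2
  · rw [finsum_mul_add_eq_mul_of_uniqueAdd hb hu huniq₂]
    exact hcoeff_ne_zero hp₂.1 hp₂.2

theorem support_infinite_of_finsum_mul_add_eq_ite [Semiring R] [NoZeroDivisors R]
    [TwoUniqueSums G] {b u : G → R} (hb : b.support.Finite)
    (hb₂ : b.support.Nontrivial) (hbu : ∀ g, ∑ᶠ h, b h * u (g + h) = if g = 0 then 1 else 0) :
    u.support.Infinite := by
  intro hu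
  obtain ⟨x, hx⟩ := hb₂.nonempty
  have : Nontrivial R := nontrivial_of_ne _ _ hx
  have hu₀ : u.support.Nonempty := by
    by_contra! hempty
    have := hbu 0
    simp [support_eq_empty_iff.mp hempty] at this
  obtain ⟨g₁, g₂, hne, h₁, h₂⟩ := exists_ne_finsum_mul_add_ne_zero hb hu hb₂ hu₀
  rw [hbu] at h₁ h₂
  exact hne ((ite_ne_right_iff.mp h₁).1.trans (ite_ne_right_iff.mp h₂).1.symm)

theorem finsum_sub_ite_mul_add [Ring R] {a u : G → R} (ha : a.support.Finite)
    (c : R) (g : G) :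
    ∑ᶠ h, (a h - if h = 0 then c else 0) * u (g + h) = ∑ᶠ h, a h * u (g + h) - c * u g := by
  simp_rw [sub_mul]
  rw [finsum_sub_distrib (ha.subset (support_mul_subset_left _ _))
    ((Set.finite_singleton 0).subset fun h hh ↦ by
      simp only [ite_mul, zero_mul, mem_support, ne_eq, ite_eq_right_iff, Classical.not_imp] at hh
      exact hh.1)]
  congr 1
  rw [finsum_eq_single _ 0 fun h h0 ↦ by simp [h0], add_zero, if_pos rfl]

end Correlation

theorem resolvent_delta_unbounded_support_general
    (n : ℕ)
    (a : (Fin n → ℤ) → ℂ)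
    (ha : (Function.support a).Finite)
    (hsymm : ∀ h : Fin n → ℤ, a (-h) = star (a h))
    (hnontriv : ∃ h : Fin n → ℤ, h ≠ 0 ∧ a h ≠ 0)
    (A : lp (fun _ : Fin n → ℤ => ℂ) 2 →L[ℂ] lp (fun _ : Fin n → ℤ => ℂ) 2)
    (hA : ∀ (u : lp (fun _ : Fin n → ℤ => ℂ) 2) (g : Fin n → ℤ),
      (A u) g = ∑ᶠ h : Fin n → ℤ, a h * u (g + h))
    (lam : ℝ)
    (u : lp (fun _ : Fin n → ℤ => ℂ) 2)
    (hu : ∀ g : Fin n → ℤ, (A u) g - (lam : ℂ) * u g = if g = 0 then 1 else 0) :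
    {g : Fin n → ℤ | u g ≠ 0}.Infinite := by
  set b : (Fin n → ℤ) → ℂ := fun h ↦ a h - if h = 0 then (lam : ℂ) else 0
  obtain ⟨h₀, hh₀, hah₀⟩ := hnontriv
  have hb_eq : ∀ {h}, h ≠ 0 → b h = a h := fun hh ↦ by simp [b, hh]
  have hb : b.support.Finite :=
    (ha.insert 0).subset fun h hh ↦ by
      by_cases h0 : h = 0
      · exact .inl h0
      · exact .inr (by rwa [mem_support, ← hb_eq h0])
  have hb₂ : b.support.Nontrivial := by
    refine Set.nontrivial_of_mem_mem_ne (x := h₀) (y := -h₀) ?_ ?_ (mt self_eq_neg.mp hh₀)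
    · rwa [mem_support, hb_eq hh₀]
    · rwa [mem_support, hb_eq (neg_ne_zero.mpr hh₀), hsymm, star_ne_zero]
  refine support_infinite_of_finsum_mul_add_eq_ite hb hb₂ fun g ↦ ?_
  rw [finsum_sub_ite_mul_add ha, ← hA, hu]

/-- Section 2.2 of the paper: the solution of the resolvent equation (A − λI)u = δ at
a delta forcing, with λ outside the spectrum, has infinite (unbounded) support. -/
theorem resolvent_delta_unbounded_support
    (n : ℕ) (hn : 0 < n)
    (a : (Fin n → ℤ) → ℂ)
    (ha : (Function.support a).Finite)
    (hsymm : ∀ h : Fin n → ℤ, a (-h) = star (a h))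
    (hnontriv : ∃ h : Fin n → ℤ, h ≠ 0 ∧ a h ≠ 0)
    (A : lp (fun _ : Fin n → ℤ => ℂ) 2 →L[ℂ] lp (fun _ : Fin n → ℤ => ℂ) 2)
    (hA : ∀ (u : lp (fun _ : Fin n → ℤ => ℂ) 2) (g : Fin n → ℤ),
      (A u) g = ∑ᶠ h : Fin n → ℤ, a h * u (g + h))
    (lam : ℝ) (hlam : (lam : ℂ) ∉ spectrum ℂ A)
    (u : lp (fun _ : Fin n → ℤ => ℂ) 2)
    (hu : ∀ g : Fin n → ℤ, (A u) g - (lam : ℂ) * u g = if g = 0 then 1 else 0) :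
    {g : Fin n → ℤ | u g ≠ 0}.Infinite :=
  resolvent_delta_unbounded_support_general n a ha hsymm hnontriv A hA lam u hu
end

section
/- Let n be a positive integer, a : ℤⁿ → ℂ finitely supported with a(−h) = conjugate(a(h)) for all h, and let A be a bounded linear operator on ℓ²(ℤⁿ) with action (A u)(g) = Σ_h a(h)·u(g+h). Let λ be a real number not in the spectrum of A, and let u ∈ ℓ²(ℤⁿ) satisfy (A − λI)u = δ (the Kronecker delta at 0). Then u decays exponentially: there exist a constant C > 0 and ρ ∈ (0,1) such that |u(g)| ≤ C·ρ^{|g₁| + ⋯ + |gₙ|} for all g ∈ ℤⁿ. -/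
/-!
Combes–Thomas estimate by analytic continuation. For an additive character `χ` and `z ∈ ℂ`,
conjugating `A - λ` by the weight `e^{zχ}` gives `D z = ∑ₕ a(h) e^{-zχ(h)} τₕ - λ` (with `τₕ` the
translations), which is entire in `z` and invertible at `z = 0`, hence on a disc `|z| < r`. For
imaginary `z` the weight is unimodular, so `D(z)⁻¹ δ = e^{zχ} u`. Each coordinate of
`z ↦ D(z)⁻¹ δ` is holomorphic on the disc, so by the identity theorem this formula persists for
real `z = t`, where `e^{tχ} u` is not known a priori to lie in `ℓᵖ`, giving `e^{tχ(g)} |u(g)| ≤ ‖D(t)⁻¹ δ‖`. The finitely many characters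
`χ(g) = ∑ σᵢ gᵢ` with signs `σᵢ` then give decay in `|g₁| + ⋯ + |gₙ|`.
-/

open Filter Complex Metric
open scoped ENNReal Topology

section Translation

variable {G 𝕜 E : Type*} [AddGroup G] [NormedField 𝕜] [NormedAddCommGroup E] [NormedSpace 𝕜 E]
  {p : ℝ≥0∞}

theorem Memℓp.comp_add_right {f : G → E} (hf : Memℓp f p) (h : G) :
    Memℓp (fun g => f (g + h)) p := by
  rcases p.trichotomy with rfl | rfl | hp
  · rw [memℓp_zero_iff] at hf ⊢
    exact hf.preimage (add_left_injective h).injOn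
  · rw [memℓp_infty_iff] at hf ⊢
    obtain ⟨C, hC⟩ := hf
    exact ⟨C, by rintro _ ⟨g, rfl⟩; exact hC ⟨g + h, rfl⟩⟩
  · rw [memℓp_gen_iff hp] at hf ⊢
    exact (Equiv.addRight h).summable_iff (f := fun g => ‖f g‖ ^ p.toReal) |>.2 hf

namespace lp

variable (𝕜) in
def translateₗ (h : G) : lp (fun _ : G => E) p →ₗ[𝕜] lp (fun _ : G => E) p where
  toFun u := ⟨fun g => u (g + h), (lp.memℓp u).comp_add_right h⟩
  map_add' _ _ := rfl
  map_smul' _ _ := rfl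

theorem norm_translateₗ [Fact (1 ≤ p)] (h : G) (u : lp (fun _ : G => E) p) :
    ‖translateₗ 𝕜 h u‖ = ‖u‖ := by
  rcases p.trichotomy with rfl | rfl | hp
  · exact absurd (Fact.out : (1 : ℝ≥0∞) ≤ 0) (by norm_num)
  · exact (Equiv.addRight h).iSup_comp (g := fun g => ‖u g‖)
  · rw [norm_eq_tsum_rpow hp, norm_eq_tsum_rpow hp]
    exact congrArg (· ^ _) ((Equiv.addRight h).tsum_eq fun g => ‖u g‖ ^ p.toReal)

variable (𝕜) in
noncomputable def translate [Fact (1 ≤ p)] (h : G) :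
    lp (fun _ : G => E) p →L[𝕜] lp (fun _ : G => E) p :=
  (translateₗ 𝕜 h).mkContinuous 1 fun u => by rw [one_mul, norm_translateₗ]

@[simp]
theorem translate_apply [Fact (1 ≤ p)] (h : G) (u : lp (fun _ : G => E) p) (g : G) :
    translate 𝕜 h u g = u (g + h) :=
  rfl

noncomputable def translationOp [Fact (1 ≤ p)] (s : Finset G) (c : G → 𝕜) :
    lp (fun _ : G => E) p →L[𝕜] lp (fun _ : G => E) p :=
  ∑ h ∈ s, c h • translate 𝕜 h

theorem translationOp_apply [Fact (1 ≤ p)] (s : Finset G) (c : G → 𝕜)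
    (u : lp (fun _ : G => E) p) (g : G) :
    translationOp s c u g = ∑ h ∈ s, c h • u (g + h) := by
  simp only [translationOp, FunLike.coe_sum, Finset.sum_apply, coeFn_sum,
    smul_apply, coeFn_smul, Pi.smul_apply, translate_apply]

end lp

end Translation

theorem AnalyticOnNhd.eqOn_ball_of_eq_ofReal_mul_I {E : Type*} [NormedAddCommGroup E]
    [NormedSpace ℂ E] {f g : ℂ → E} {r : ℝ} (hf : AnalyticOnNhd ℂ f (ball 0 r))
    (hg : AnalyticOnNhd ℂ g (ball 0 r))
    (hfg : ∀ y : ℝ, (y : ℂ) * I ∈ ball 0 r → f (y * I) = g (y * I)) :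
    Set.EqOn f g (ball 0 r) := by
  intro z hz
  have hr : 0 < r := (norm_nonneg z).trans_lt (mem_ball_zero_iff.1 hz)
  have hI : Tendsto (fun y : ℝ => (y : ℂ) * I) (𝓝[≠] 0) (𝓝[≠] 0) :=
    tendsto_nhdsWithin_of_tendsto_nhds_of_eventually_within _
      (((continuous_ofReal.mul continuous_const).tendsto' 0 0 (by simp)).mono_left
        nhdsWithin_le_nhds)
      (eventually_nhdsWithin_of_forall fun y hy => mul_ne_zero (ofReal_ne_zero.2 hy) I_ne_zero)
  exact hf.eqOn_of_preconnected_of_frequently_eq hg (convex_ball 0 r).isPreconnected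
    (mem_ball_self hr) (hI.frequently ((hI.eventually
      (mem_nhdsWithin_of_mem_nhds (ball_mem_nhds 0 hr))).mono hfg).frequently) hz

namespace lp

variable {G : Type*} [AddGroup G] {p : ℝ≥0∞} [Fact (1 ≤ p)]

theorem differentiable_translationOp_mul_exp (s : Finset G) (c χ : G → ℂ) :
    Differentiable ℂ fun z : ℂ =>
      (translationOp s (fun h => c h * exp (-(z * χ h))) :
        lp (fun _ : G => ℂ) p →L[ℂ] lp (fun _ : G => ℂ) p) := by
  unfold translationOp
  exact Differentiable.fun_sum fun h _ =>
    ((differentiable_const _).mul (differentiable_exp.comp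
      (differentiable_id.mul_const _).neg)).smul_const _

theorem translationOp_mul_exp_apply (s : Finset G) (c : G → ℂ) (χ : G →+ ℝ) (z : ℂ)
    {v w : lp (fun _ : G => ℂ) p} (hvw : ∀ g, v g = exp (z * χ g) * w g) (g : G) :
    translationOp s (fun h => c h * exp (-(z * χ h))) v g =
      exp (z * χ g) * translationOp s c w g := by
  simp only [translationOp_apply, hvw, map_add, smul_eq_mul, Finset.mul_sum, ofReal_add]
  refine Finset.sum_congr rfl fun h _ => ?_
  rw [mul_add, exp_add, exp_neg]
  field_simp

theorem translationOp_mul_exp_sub_algebraMap_apply_eq_single [DecidableEq G] (s : Finset G)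
    (c : G → ℂ) {lam : ℂ} {u : lp (fun _ : G => ℂ) p}
    (hu : translationOp s c u - lam • u = lp.single p 0 1)
    (χ : G →+ ℝ) (z : ℂ) {v : lp (fun _ : G => ℂ) p} (hv : ∀ g, v g = exp (z * χ g) * u g) :
    (translationOp s (fun h => c h * exp (-(z * χ h))) - algebraMap ℂ _ lam) v =
      lp.single p 0 1 := by
  ext g
  have hsingle : exp (z * χ g) * (lp.single p 0 1 : lp (fun _ : G => ℂ) p) g =
      (lp.single p 0 1 : lp (fun _ : G => ℂ) p) g := by
    by_cases hg : g = 0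
    · simp [hg]
    · rw [lp.single_apply_ne p 0 _ hg, mul_zero]
  rw [← hsingle, ← hu]
  simp only [sub_apply, lp.coeFn_sub, Pi.sub_apply, lp.coeFn_smul, Pi.smul_apply, smul_eq_mul,
    Algebra.algebraMap_eq_smul_one, smul_apply, one_apply_eq_self, hv,
    translationOp_mul_exp_apply s c χ z hv]
  ring

theorem eventually_bddAbove_exp_mul_norm [DecidableEq G] (s : Finset G) (c : G → ℂ) {lam : ℂ}
    (hlam : lam ∉ spectrum ℂ (translationOp s c : lp (fun _ : G => ℂ) p →L[ℂ] _))
    {u : lp (fun _ : G => ℂ) p} (hu : translationOp s c u - lam • u = lp.single p 0 1)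
    (χ : G →+ ℝ) :
    ∀ᶠ t : ℝ in 𝓝 0, BddAbove (Set.range fun g => Real.exp (t * χ g) * ‖u g‖) := by
  set δ : lp (fun _ : G => ℂ) p := lp.single p 0 1
  set D : ℂ → (lp (fun _ : G => ℂ) p →L[ℂ] lp (fun _ : G => ℂ) p) := fun z =>
    translationOp s (fun h => c h * exp (-(z * χ h))) - algebraMap ℂ _ lam
  have hD : Differentiable ℂ D := (differentiable_translationOp_mul_exp s c _).sub_const _
  have hD0 : IsUnit (D 0) := by
    simpa [D, neg_sub] using (spectrum.notMem_iff.1 hlam).neg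
  obtain ⟨r, hr, hunit⟩ : ∃ r > 0, ∀ z ∈ ball 0 r, IsUnit (D z) :=
    eventually_nhds_iff_ball.1 (hD.continuous.continuousAt.eventually (Units.isOpen.mem_nhds hD0))
  have himag (g : G) (y : ℝ) (hy : (y : ℂ) * I ∈ ball 0 r) :
      Ring.inverse (D (y * I)) δ g = exp (y * I * χ g) * u g := by
    have hmem : Memℓp (fun g => exp (y * I * χ g) * u g) p :=
      (lp.memℓp u).mono' fun g => by
        rw [norm_mul, mul_right_comm, ← ofReal_mul, norm_exp_ofReal_mul_I, one_mul]
    let m : lp (fun _ : G => ℂ) p := ⟨_, hmem⟩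
    have hDm : D (y * I) m = δ :=
      translationOp_mul_exp_sub_algebraMap_apply_eq_single s c hu χ _ fun _ => rfl
    have hinv : Ring.inverse (D (y * I)) δ = m := by
      rw [← hDm]
      exact congr($(Ring.inverse_mul_cancel _ (hunit _ hy)) m)
    rw [hinv]
  have heq (g : G) : Set.EqOn (fun z => Ring.inverse (D z) δ g) (fun z => exp (z * χ g) * u g)
      (ball 0 r) := by
    have hF : DifferentiableOn ℂ (lp.evalCLM ℂ _ p g ∘ fun z => Ring.inverse (D z) δ)
        (ball 0 r) :=
      (lp.evalCLM ℂ _ p g).differentiable.comp_differentiableOn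
        ((hD.differentiableOn.inverse hunit).clm_apply (differentiableOn_const δ))
    have hexp : Differentiable ℂ fun z => exp (z * χ g) * u g :=
      (differentiable_exp.comp (differentiable_id.mul_const _)).mul_const _
    exact AnalyticOnNhd.eqOn_ball_of_eq_ofReal_mul_I (hF.analyticOnNhd isOpen_ball)
      (hexp.differentiableOn.analyticOnNhd isOpen_ball) (himag g)
  filter_upwards [(continuous_ofReal.tendsto' 0 0 ofReal_zero).eventually (ball_mem_nhds 0 hr)]
    with t ht
  refine ⟨‖Ring.inverse (D t) δ‖, ?_⟩
  rintro _ ⟨g, rfl⟩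
  calc Real.exp (t * χ g) * ‖u g‖ = ‖exp (t * χ g) * u g‖ := by
        rw [norm_mul, ← ofReal_mul, norm_exp_ofReal]
    _ = ‖Ring.inverse (D t) δ g‖ := congrArg norm (heq g ht).symm
    _ ≤ ‖Ring.inverse (D t) δ‖ := norm_apply_le_norm (zero_lt_one.trans_le Fact.out).ne' _ _

end lp

def signedCoordSum {ι : Type*} [Fintype ι] (σ : ι → SignType) : (ι → ℤ) →+ ℝ :=
  AddMonoidHom.mk' (fun g => ∑ i, (σ i : ℝ) * g i) fun g h => by
    simp only [Pi.add_apply, Int.cast_add, mul_add, Finset.sum_add_distrib]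

theorem signedCoordSum_sign {ι : Type*} [Fintype ι] (g : ι → ℤ) :
    signedCoordSum (fun i => SignType.sign (g i)) g = ((∑ i, (g i).natAbs : ℕ) : ℝ) := by
  simp only [signedCoordSum, AddMonoidHom.mk'_apply, Nat.cast_sum]
  refine Finset.sum_congr rfl fun i _ => ?_
  rw [← SignType.intCast_cast, ← Int.cast_mul, sign_mul_self, Nat.cast_natAbs]

theorem exists_le_mul_pow_sum_natAbs_of_eventually_bddAbove {ι : Type*} [Fintype ι]
    {f : (ι → ℤ) → ℝ} (hf : ∀ σ : ι → SignType, ∀ᶠ t : ℝ in 𝓝 0,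
      BddAbove (Set.range fun g => Real.exp (t * signedCoordSum σ g) * f g)) :
    ∃ C : ℝ, 0 < C ∧ ∃ ρ : ℝ, ρ ∈ Set.Ioo (0 : ℝ) 1 ∧
      ∀ g : ι → ℤ, f g ≤ C * ρ ^ (∑ i, (g i).natAbs) := by
  obtain ⟨t, hbdd, ht⟩ := ((eventually_all.2 hf).filter_mono nhdsWithin_le_nhds |>.and
    (self_mem_nhdsWithin : Set.Ioi (0 : ℝ) ∈ 𝓝[>] 0)).exists
  choose M hM using hbdd
  obtain ⟨M₀, hM₀⟩ := Finite.bddAbove_range M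
  refine ⟨max M₀ 1, by positivity, Real.exp (-t),
    ⟨Real.exp_pos _, Real.exp_lt_one_iff.2 (neg_lt_zero.2 ht)⟩, fun g => ?_⟩
  set N := ∑ i, (g i).natAbs
  have hg : Real.exp (t * N) * f g ≤ M₀ := by
    have hσ : Real.exp (t * signedCoordSum (fun i => SignType.sign (g i)) g) * f g ≤ M₀ :=
      (hM _ ⟨g, rfl⟩).trans (hM₀ ⟨_, rfl⟩)
    rwa [signedCoordSum_sign] at hσ
  calc f g = Real.exp (-t) ^ N * (Real.exp (t * N) * f g) := by
        rw [← Real.exp_nat_mul, ← mul_assoc, ← Real.exp_add,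
          show (N : ℝ) * -t + t * N = 0 by ring, Real.exp_zero, one_mul]
    _ ≤ Real.exp (-t) ^ N * max M₀ 1 := by gcongr; exact hg.trans (le_max_left _ _)
    _ = max M₀ 1 * Real.exp (-t) ^ N := mul_comm _ _

theorem resolvent_delta_exponential_decay_general
    (n : ℕ)
    (a : (Fin n → ℤ) → ℂ)
    (ha : (Function.support a).Finite)
    (A : lp (fun _ : Fin n → ℤ => ℂ) 2 →L[ℂ] lp (fun _ : Fin n → ℤ => ℂ) 2)
    (hA : ∀ (u : lp (fun _ : Fin n → ℤ => ℂ) 2) (g : Fin n → ℤ),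
      (A u) g = ∑ᶠ h : Fin n → ℤ, a h * u (g + h))
    (lam : ℝ) (hlam : (lam : ℂ) ∉ spectrum ℂ A)
    (u : lp (fun _ : Fin n → ℤ => ℂ) 2)
    (hu : ∀ g : Fin n → ℤ, (A u) g - (lam : ℂ) * u g = if g = 0 then 1 else 0) :
    ∃ C : ℝ, 0 < C ∧ ∃ ρ : ℝ, ρ ∈ Set.Ioo (0 : ℝ) 1 ∧
      ∀ g : Fin n → ℤ, ‖u g‖ ≤ C * ρ ^ (∑ i, (g i).natAbs) := by
  obtain rfl : A = lp.translationOp ha.toFinset a := by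
    ext v g
    rw [hA, lp.translationOp_apply, finsum_eq_sum_of_support_subset _
      ((Function.support_mul_subset_left _ _).trans ha.coe_toFinset.superset)]
    rfl
  have hδ : lp.translationOp ha.toFinset a u - (lam : ℂ) • u = lp.single 2 0 1 := by
    ext g
    simp only [lp.coeFn_sub, Pi.sub_apply, lp.coeFn_smul, Pi.smul_apply, smul_eq_mul,
      lp.single_apply, Pi.single_apply]
    exact hu g
  exact exists_le_mul_pow_sum_natAbs_of_eventually_bddAbove fun σ =>
    lp.eventually_bddAbove_exp_mul_norm ha.toFinset a hlam hδ (signedCoordSum σ)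

/-- Section 2.2 of the paper: the solution of (A − λI)u = δ with λ outside the spectrum
decays exponentially: |u(g)| ≤ C ρ^{|g₁|+⋯+|gₙ|} for some C > 0 and 0 < ρ < 1. -/
theorem resolvent_delta_exponential_decay
    (n : ℕ) (hn : 0 < n)
    (a : (Fin n → ℤ) → ℂ)
    (ha : (Function.support a).Finite)
    (hsymm : ∀ h : Fin n → ℤ, a (-h) = star (a h))
    (A : lp (fun _ : Fin n → ℤ => ℂ) 2 →L[ℂ] lp (fun _ : Fin n → ℤ => ℂ) 2)
    (hA : ∀ (u : lp (fun _ : Fin n → ℤ => ℂ) 2) (g : Fin n → ℤ),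
      (A u) g = ∑ᶠ h : Fin n → ℤ, a h * u (g + h))
    (lam : ℝ) (hlam : (lam : ℂ) ∉ spectrum ℂ A)
    (u : lp (fun _ : Fin n → ℤ => ℂ) 2)
    (hu : ∀ g : Fin n → ℤ, (A u) g - (lam : ℂ) * u g = if g = 0 then 1 else 0) :
    ∃ C : ℝ, 0 < C ∧ ∃ ρ : ℝ, ρ ∈ Set.Ioo (0 : ℝ) 1 ∧
      ∀ g : Fin n → ℤ, ‖u g‖ ≤ C * ρ ^ (∑ i, (g i).natAbs) :=
  resolvent_delta_exponential_decay_general n a ha A hA lam hlam u hu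
end

section
/- For all complex numbers μ and z, the determinant of the 3×3 matrix [[−sin(μ/2), z, 0],[−sin(μ/2), cos μ, sin μ],[−μ cos(μ/2), μ sin μ, μ(z − cos μ)]] equals μ·sin(μ/2)·(z² − (3 cos μ + 1)z + 1), and the determinant of the 3×3 matrix [[−cos(μ/2), z, 0],[−cos(μ/2), cos μ, sin μ],[μ sin(μ/2), μ sin μ, μ(z − cos μ)]] equals μ·cos(μ/2)·(z² − (3 cos μ − 1)z + 1). Consequently, for μ, z with μ·sin(μ/2) ≠ 0 and z ≠ 0, the first matrix is singular if and only if z + z^{-1} = 3 cos μ + 1, and for μ·cos(μ/2) ≠ 0 and z ≠ 0 the second is singular if and only if z + z^{-1} = 3 cos μ − 1. -/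
/-- The determinants of the matching matrices of Example 3 (equation (14) of the paper)
factor as μ·sin(μ/2)·(z² − (3cosμ+1)z + 1) (anti-symmetric case) and
μ·cos(μ/2)·(z² − (3cosμ−1)z + 1) (symmetric case); consequently the matrices are
singular precisely on the dispersion curves z + z⁻¹ = 3cosμ ± 1. -/
theorem quantum_graph_dispersion_determinants (μ z : ℂ) :
    (Matrix.det !![-Complex.sin (μ / 2), z, 0;
                   -Complex.sin (μ / 2), Complex.cos μ, Complex.sin μ;
                   -μ * Complex.cos (μ / 2), μ * Complex.sin μ, μ * (z - Complex.cos μ)]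
        = μ * Complex.sin (μ / 2) * (z ^ 2 - (3 * Complex.cos μ + 1) * z + 1))
    ∧ (Matrix.det !![-Complex.cos (μ / 2), z, 0;
                   -Complex.cos (μ / 2), Complex.cos μ, Complex.sin μ;
                   μ * Complex.sin (μ / 2), μ * Complex.sin μ, μ * (z - Complex.cos μ)]
        = μ * Complex.cos (μ / 2) * (z ^ 2 - (3 * Complex.cos μ - 1) * z + 1))
    ∧ (μ * Complex.sin (μ / 2) ≠ 0 → z ≠ 0 →
        (Matrix.det !![-Complex.sin (μ / 2), z, 0;
                   -Complex.sin (μ / 2), Complex.cos μ, Complex.sin μ;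
                   -μ * Complex.cos (μ / 2), μ * Complex.sin μ, μ * (z - Complex.cos μ)] = 0
          ↔ z + z⁻¹ = 3 * Complex.cos μ + 1))
    ∧ (μ * Complex.cos (μ / 2) ≠ 0 → z ≠ 0 →
        (Matrix.det !![-Complex.cos (μ / 2), z, 0;
                   -Complex.cos (μ / 2), Complex.cos μ, Complex.sin μ;
                   μ * Complex.sin (μ / 2), μ * Complex.sin μ, μ * (z - Complex.cos μ)] = 0
          ↔ z + z⁻¹ = 3 * Complex.cos μ - 1)) := by
  have hμ : μ = 2 * (μ / 2) := by ring
  have hs : Complex.sin μ = 2 * Complex.sin (μ / 2) * Complex.cos (μ / 2) := by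
    rw [hμ, Complex.sin_two_mul]; ring
  have hc : Complex.cos μ = 2 * Complex.cos (μ / 2) ^ 2 - 1 := by
    nth_rewrite 1 [hμ]; rw [Complex.cos_two_mul]
  have hpy : Complex.sin (μ / 2) ^ 2 = 1 - Complex.cos (μ / 2) ^ 2 := by
    have := Complex.sin_sq_add_cos_sq (μ / 2); linear_combination this
  have h1 : Matrix.det !![-Complex.sin (μ / 2), z, 0;
                   -Complex.sin (μ / 2), Complex.cos μ, Complex.sin μ;
                   -μ * Complex.cos (μ / 2), μ * Complex.sin μ, μ * (z - Complex.cos μ)]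
        = μ * Complex.sin (μ / 2) * (z ^ 2 - (3 * Complex.cos μ + 1) * z + 1) := by
    simp [Matrix.det_fin_three]
    rw [hs, hc]
    linear_combination (4 * μ * Complex.sin (μ/2) * Complex.cos (μ/2)^2) * hpy
  have h2 : Matrix.det !![-Complex.cos (μ / 2), z, 0;
                   -Complex.cos (μ / 2), Complex.cos μ, Complex.sin μ;
                   μ * Complex.sin (μ / 2), μ * Complex.sin μ, μ * (z - Complex.cos μ)]
        = μ * Complex.cos (μ / 2) * (z ^ 2 - (3 * Complex.cos μ - 1) * z + 1) := by
    simp [Matrix.det_fin_three]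
    rw [hs, hc]
    linear_combination (2 * μ * z * Complex.cos (μ/2) + 4 * μ * Complex.cos (μ/2)^3) * hpy
  have key : ∀ a : ℂ, z ≠ 0 → (z ^ 2 - a * z + 1 = 0 ↔ z + z⁻¹ = a) := by
    intro a hz
    rw [← sub_eq_zero (b := a)]
    field_simp
    constructor <;> intro h <;> linear_combination h
  refine ⟨h1, h2, ?_, ?_⟩
  · intro hne hz
    rw [h1, mul_eq_zero, or_iff_right hne, key _ hz]
  · intro hne hz
    rw [h2, mul_eq_zero, or_iff_right hne, key _ hz]
end

section
/- Let a, b, μ, ζ₁, ζ₂ be complex numbers with μ ≠ 0, ζ₁ ≠ 0, and ζ₂ ≠ 0. Then the determinant of the 5×5 matrix [[a, −1, 0, 0, 0],[a, −ζ₁ cos μ, −ζ₁ (sin μ)/μ, 0, 0],[a, 0, 0, −1, 0],[a, 0, 0, −ζ₂ cos μ, −ζ₂ (sin μ)/μ],[b, −ζ₁ μ sin μ, ζ₁ cos μ − 1, −ζ₂ μ sin μ, ζ₂ cos μ − 1]] equals ζ₁·ζ₂·((sin μ)/μ)·( 4a cos μ + b (sin μ)/μ − a(ζ₁ + ζ₁^{-1}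 + ζ₂ + ζ₂^{-1}) ). -/
/-! Expanding the determinant is a polynomial identity over any commutative ring, in which
`cos μ` and `sin μ / μ` enter only through `cos² μ + (sin μ / μ)(μ sin μ) = 1`, and
`ζ₁ ζ₂ (ζ₁ + ζ₁⁻¹ + ζ₂ + ζ₂⁻¹) = (ζ₁ + ζ₂)(1 + ζ₁ ζ₂)`. -/

theorem det_decoratedGrid_matching {R : Type*} [CommRing R] (a b c s t z₁ z₂ : R) :
    Matrix.det
      !![a, -1, 0, 0, 0;
         a, -z₁ * c, -z₁ * s, 0, 0;
         a, 0, 0, -1, 0;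
         a, 0, 0, -z₂ * c, -z₂ * s;
         b, -z₁ * t, z₁ * c - 1, -z₂ * t, z₂ * c - 1]
      = z₁ * z₂ * s * (4 * a * c + b * s) - a * s * (z₁ + z₂) * (1 + z₁ * z₂ * (c ^ 2 + s * t)) := by
  simp [Matrix.det_succ_row_zero, Fin.sum_univ_succ, Fin.succAbove]
  ring

theorem Complex.cos_sq_add_sin_div_mul_mul_sin {μ : ℂ} (hμ : μ ≠ 0) :
    Complex.cos μ ^ 2 + Complex.sin μ / μ * (μ * Complex.sin μ) = 1 := by
  field_simp
  linear_combination Complex.sin_sq_add_cos_sq μ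

/-- The determinant formula D(a,b) (equation (37) of the paper) for the 5×5 matching
matrix of the decorated square-grid quantum graph Γ*. -/
theorem decorated_grid_determinant
    (a b μ ζ₁ ζ₂ : ℂ) (hμ : μ ≠ 0) (hζ₁ : ζ₁ ≠ 0) (hζ₂ : ζ₂ ≠ 0) :
    Matrix.det
      !![a, -1, 0, 0, 0;
         a, -ζ₁ * Complex.cos μ, -ζ₁ * (Complex.sin μ / μ), 0, 0;
         a, 0, 0, -1, 0;
         a, 0, 0, -ζ₂ * Complex.cos μ, -ζ₂ * (Complex.sin μ / μ);
         b, -ζ₁ * μ * Complex.sin μ, ζ₁ * Complex.cos μ - 1,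
            -ζ₂ * μ * Complex.sin μ, ζ₂ * Complex.cos μ - 1]
      = ζ₁ * ζ₂ * (Complex.sin μ / μ) *
          (4 * a * Complex.cos μ + b * (Complex.sin μ / μ)
            - a * (ζ₁ + ζ₁⁻¹ + ζ₂ + ζ₂⁻¹)) := by
  rw [mul_assoc (-ζ₁), mul_assoc (-ζ₂), det_decoratedGrid_matching,
    Complex.cos_sq_add_sin_div_mul_mul_sin hμ]
  field_simp
  ring
end
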